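/- Let p be an odd prime. There exists an element π = π₀ + π₁i + π₂j + π₃k ∈ 𝒫(p) with π₀ = 0 if and only if p ≡ 3 (mod 8). -/

import Mathlib

open Quaternion

/-- The content of an integral quaternion: the gcd of its four coordinates. -/
def content (a : ℍ[ℤ]) : ℕ :=
  Int.gcd (Int.gcd a.re a.imI) (Int.gcd a.imJ a.imK)

/-- An integral quaternion is primitive if its content is `1`. -/
def Primitive (a : ℍ[ℤ]) : Prop := content a = 1

/-- The eight units of `ℍ[ℤ]`: `±1, ±i, ±j, ±k`. -/
def quatUnits : Set ℍ[ℤ] :=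
  {1, -1, ⟨0, 1, 0, 0⟩, ⟨0, -1, 0, 0⟩, ⟨0, 0, 1, 0⟩, ⟨0, 0, -1, 0⟩, ⟨0, 0, 0, 1⟩, ⟨0, 0, 0, -1⟩}

/-- The distinguished set `𝒫(p)` of quaternions of norm `p` (for an odd prime `p`). -/
def Pset (p : ℕ) : Set ℍ[ℤ] :=
  {π | Primitive π ∧ Quaternion.normSq π = (p : ℤ) ∧
    (if p % 4 = 1 then
      0 < π.re ∧ ∃ β : ℍ[ℤ], π - 1 = 2 * β
    else
      (∃ β : ℍ[ℤ], π - ⟨0, 1, 1, 1⟩ = 2 * β) ∧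
        (π.re ≠ 0 → 0 < π.re) ∧ (π.re = 0 → 0 < π.imI))}

/-!
If `π` has real part `0` and `π ≡ i + j + k (mod 2)`, its three imaginary parts are odd, so
`p = N(π)` is a sum of three odd squares and `p ≡ 3 (mod 8)`; for `p ≡ 1 (mod 4)` the normalisation
`π₀ > 0` excludes `π₀ = 0` outright. Conversely, for `p ≡ 3 (mod 8)` the class `-2` is a square mod
`p`, and Thue's lemma turns a square root of `-2` into `p = a² + 2b²`, where `a` and `b` are forced
to be odd. Then `π = |a| i + |b| j + |b| k` lies in `𝒫(p)`: it is primitive because the square of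
the content of a quaternion divides its norm.
-/

-- Thue's lemma, by pigeonhole on the `(⌊√n⌋ + 1)² > n` pairs of naturals at most `⌊√n⌋`.
theorem ZMod.exists_small_eq_mul (n : ℕ) [NeZero n] (a : ZMod n) :
    ∃ u v : ℤ, (u, v) ≠ 0 ∧ |u| ≤ n.sqrt ∧ |v| ≤ n.sqrt ∧ (u : ZMod n) = a * v := by
  set s := Finset.Iic n.sqrt ×ˢ Finset.Iic n.sqrt
  have hcard : (Finset.univ : Finset (ZMod n)).card < s.card := by
    rw [Finset.card_univ, ZMod.card, Finset.card_product, Nat.card_Iic, ← sq]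
    exact Nat.lt_succ_sqrt' n
  obtain ⟨x, hx, y, hy, hxy, hf⟩ := Finset.exists_ne_map_eq_of_card_lt_of_maps_to hcard
    (f := fun z : ℕ × ℕ => (z.1 : ZMod n) - a * z.2) (fun _ _ => Finset.mem_coe.2 (Finset.mem_univ _))
  simp only [s, Finset.mem_product, Finset.mem_Iic] at hx hy
  refine ⟨x.1 - y.1, x.2 - y.2, fun h => hxy ?_, by rw [abs_le]; omega, by rw [abs_le]; omega, ?_⟩
  · simp only [Prod.mk_eq_zero, sub_eq_zero, Nat.cast_inj] at h
    exact Prod.ext h.1 h.2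
  · push_cast
    linear_combination hf

theorem Nat.Prime.sqrt_sq_lt {p : ℕ} (hp : p.Prime) : p.sqrt ^ 2 < p := by
  refine (Nat.sqrt_le' p).lt_of_ne fun h => ?_
  exact (Nat.prime_iff.1 hp).irreducible.not_isSquare ⟨p.sqrt, by rw [← sq, h]⟩

theorem Nat.Prime.exists_sq_add_two_mul_sq {p : ℕ} (hp : p.Prime) {a : ZMod p} (ha : a ^ 2 = -2) :
    ∃ u v : ℤ, u ^ 2 + 2 * v ^ 2 = p := by
  have := NeZero.of_pos hp.pos
  obtain ⟨u, v, hne, hu, hv, huv⟩ := ZMod.exists_small_eq_mul p a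
  have hdvd : (p : ℤ) ∣ u ^ 2 + 2 * v ^ 2 := by
    rw [← ZMod.intCast_zmod_eq_zero_iff_dvd]
    push_cast
    linear_combination (↑u + a * ↑v) * huv + (v : ZMod p) ^ 2 * ha
  have hpos : 0 < u ^ 2 + 2 * v ^ 2 := by
    rcases eq_or_ne u 0 with rfl | hu0
    · have hv0 : v ≠ 0 := fun h => hne (by simp [h])
      positivity
    · positivity
  have hlt : u ^ 2 + 2 * v ^ 2 < 3 * p := by
    have hsq : ((p.sqrt : ℕ) : ℤ) ^ 2 < p := by exact_mod_cast hp.sqrt_sq_lt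
    nlinarith [sq_le_sq' (abs_le.1 hu).1 (abs_le.1 hu).2, sq_le_sq' (abs_le.1 hv).1 (abs_le.1 hv).2]
  obtain ⟨m, hpm⟩ := hdvd
  have hm : m = 1 ∨ m = 2 := by
    have : 0 < m := by nlinarith
    have : m < 3 := by nlinarith
    omega
  rcases hm with rfl | rfl
  · exact ⟨u, v, by linarith⟩
  · obtain ⟨w, rfl⟩ : Even u := by
      rw [← Int.even_pow' two_ne_zero]
      exact ⟨p - v ^ 2, by linarith⟩
    exact ⟨v, w, by linarith⟩

theorem Int.sq_emod_eight_of_odd {x : ℤ} (hx : Odd x) : x ^ 2 % 8 = 1 := by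
  obtain ⟨c, rfl⟩ := hx
  obtain ⟨d, hd⟩ := Int.even_mul_succ_self c
  have : (2 * c + 1) ^ 2 = 4 * (c * (c + 1)) + 1 := by ring
  omega

theorem odd_of_sq_add_two_mul_sq_emod_eight {a b : ℤ} (h : (a ^ 2 + 2 * b ^ 2) % 8 = 3) :
    Odd a ∧ Odd b := by
  have ha : Odd a := by
    by_contra hev
    obtain ⟨c, rfl⟩ := Int.not_odd_iff_even.1 hev
    have : (c + c) ^ 2 = 4 * c ^ 2 := by ring
    omega
  refine ⟨ha, ?_⟩
  by_contra hev
  obtain ⟨d, rfl⟩ := Int.not_odd_iff_even.1 hev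
  have : (d + d) ^ 2 = 4 * d ^ 2 := by ring
  have := Int.sq_emod_eight_of_odd ha
  omega

theorem Nat.Prime.exists_odd_sq_add_two_mul_sq {p : ℕ} (hp : p.Prime) (hp8 : p % 8 = 3) :
    ∃ a b : ℤ, a ^ 2 + 2 * b ^ 2 = p ∧ Odd a ∧ Odd b := by
  have := Fact.mk hp
  obtain ⟨r, hr⟩ := (ZMod.exists_sq_eq_neg_two_iff (by omega)).2 (Or.inr hp8)
  obtain ⟨a, b, hab⟩ := hp.exists_sq_add_two_mul_sq (a := r) (by rw [sq, hr])
  exact ⟨a, b, hab, odd_of_sq_add_two_mul_sq_emod_eight (by omega)⟩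

theorem content_sq_dvd_normSq (a : ℍ[ℤ]) : (content a : ℤ) ^ 2 ∣ normSq a := by
  have hre : (content a : ℤ) ∣ a.re := (Int.gcd_dvd_left _ _).trans (Int.gcd_dvd_left _ _)
  have hI : (content a : ℤ) ∣ a.imI := (Int.gcd_dvd_left _ _).trans (Int.gcd_dvd_right _ _)
  have hJ : (content a : ℤ) ∣ a.imJ := (Int.gcd_dvd_right _ _).trans (Int.gcd_dvd_left _ _)
  have hK : (content a : ℤ) ∣ a.imK := (Int.gcd_dvd_right _ _).trans (Int.gcd_dvd_right _ _)
  rw [normSq_def']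
  exact dvd_add (dvd_add (dvd_add (pow_dvd_pow_of_dvd hre 2) (pow_dvd_pow_of_dvd hI 2))
    (pow_dvd_pow_of_dvd hJ 2)) (pow_dvd_pow_of_dvd hK 2)

theorem primitive_of_normSq_prime {a : ℍ[ℤ]} {p : ℕ} (hp : p.Prime) (h : normSq a = p) :
    Primitive a := by
  have hdvd : content a * content a ∣ p := by
    rw [← sq, ← Int.natCast_dvd_natCast, ← h]
    exact_mod_cast content_sq_dvd_normSq a
  exact Nat.isUnit_iff.1 (hp.prime.squarefree _ hdvd)

-- `⟨0, 1, 1, 1⟩` elaborates at `ℍ[ℤ,-1,0,-1]`, not syntactically at `ℍ[ℤ]`, so the simp lemmas for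
-- the coordinates do not fire; they are read off with `show` instead.
theorem exists_sub_eq_two_mul_iff (π : ℍ[ℤ]) :
    (∃ β : ℍ[ℤ], π - ⟨0, 1, 1, 1⟩ = 2 * β) ↔ Even π.re ∧ Odd π.imI ∧ Odd π.imJ ∧ Odd π.imK := by
  simp only [two_mul]
  constructor
  · rintro ⟨β, h⟩
    obtain ⟨h0, h1, h2, h3⟩ := QuaternionAlgebra.ext_iff.1 h
    exact ⟨⟨β.re, by linarith [show π.re - 0 = β.re + β.re from h0]⟩,
      ⟨β.imI, by linarith [show π.imI - 1 = β.imI + β.imI from h1]⟩,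
      ⟨β.imJ, by linarith [show π.imJ - 1 = β.imJ + β.imJ from h2]⟩,
      ⟨β.imK, by linarith [show π.imK - 1 = β.imK + β.imK from h3]⟩⟩
  · rintro ⟨⟨r, hr⟩, ⟨s, hs⟩, ⟨t, ht⟩, ⟨u, hu⟩⟩
    exact ⟨⟨r, s, t, u⟩, QuaternionAlgebra.ext (show π.re - 0 = r + r by omega)
      (show π.imI - 1 = s + s by omega) (show π.imJ - 1 = t + t by omega)
      (show π.imK - 1 = u + u by omega)⟩

theorem emod_eight_eq_three_of_mem_Pset {p : ℕ} {π : ℍ[ℤ]} (hπ : π ∈ Pset p) (hre : π.re = 0) :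
    p % 8 = 3 := by
  obtain ⟨-, hnorm, hcond⟩ := hπ
  split_ifs at hcond
  · exact absurd hcond.1 (by rw [hre]; exact lt_irrefl 0)
  obtain ⟨-, hI, hJ, hK⟩ := (exists_sub_eq_two_mul_iff π).1 hcond.1
  rw [normSq_def', hre] at hnorm
  have := Int.sq_emod_eight_of_odd hI
  have := Int.sq_emod_eight_of_odd hJ
  have := Int.sq_emod_eight_of_odd hK
  omega

theorem exists_mem_Pset_re_eq_zero {p : ℕ} (hp : p.Prime) (hp8 : p % 8 = 3) :
    ∃ π ∈ Pset p, π.re = 0 := by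
  obtain ⟨a, b, hab, ha, hb⟩ := hp.exists_odd_sq_add_two_mul_sq hp8
  have hnorm : normSq (⟨0, |a|, |b|, |b|⟩ : ℍ[ℤ]) = p := by
    refine (normSq_def' _).trans ?_
    dsimp only
    rw [sq_abs, sq_abs, ← hab]
    ring
  refine ⟨⟨0, |a|, |b|, |b|⟩, ⟨primitive_of_normSq_prime hp hnorm, hnorm, ?_⟩, rfl⟩
  rw [if_neg (by omega)]
  refine ⟨(exists_sub_eq_two_mul_iff _).2 ⟨Even.zero, odd_abs.2 ha, odd_abs.2 hb, odd_abs.2 hb⟩,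
    fun h => absurd rfl h, fun _ => abs_pos.2 ?_⟩
  rintro rfl
  simp at ha

theorem stmt_9_general (p : ℕ) (hp : p.Prime) :
    (∃ π ∈ Pset p, π.re = 0) ↔ p % 8 = 3 :=
  ⟨fun ⟨_, hπ, hre⟩ => emod_eight_eq_three_of_mem_Pset hπ hre, exists_mem_Pset_re_eq_zero hp⟩

/-- There is an element of `𝒫(p)` with vanishing real part
iff `p ≡ 3 (mod 8)`. -/
theorem stmt_9 (p : ℕ) (hp : p.Prime) (hodd : Odd p) :
    (∃ π ∈ Pset p, π.re = 0) ↔ p % 8 = 3 :=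
  stmt_9_general p hp
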